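/- arXiv:2511.09963 — 3 statements merged into one kernel-verified Lean document; each statement's English description precedes it below -/
import Mathlib

section
/- (L¹ bound for the characteristics formula.) Let T > 0, x ∈ C⁰([0,T]), D ∈ L^∞([0,T]), f₀ ∈ C⁰([0,∞)) ∩ L¹([0,∞)) and β ∈ C⁰([0,∞)) ∩ L^∞([0,∞)), with f₀(0) = x(0). Define f(t,a) = f₀(a−t)·exp(−∫₀^t D(s)ds − ∫_{a−t}^a β(s)ds) for 0 ≤ t ≤ a and f(t,a) = x(t−a)·exp(−∫_{t−a}^t D(s)ds − ∫₀^a β(s)ds) for t > a ≥ 0. Then for all t ∈ [0,T]: ∫₀^∞ |f(t,a)| da ≤ exp((‖D‖_∞ + ‖β‖_∞)T)·(‖x‖_∞·T + ‖f₀‖_{L¹}); in particular sup_{t∈[0,T]} ‖f[t]‖_{L¹} < ∞. Moreover, if in addition D(t) ≥ 0 for a.e. t and β(a) ≥ 0 for all a, then ∫₀^∞ |f(t,a)| da ≤ ‖x‖_∞·t + ‖f₀‖_{L¹} for all t ∈ [0,T]. -/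
open MeasureTheory Set Filter

/-- **L¹ bound for the characteristics formula.** With `f` defined by the
characteristics formula (4.1), `Cx ≥ ‖x‖_∞`, `CD ≥ ‖D‖_∞` (a.e. bound) and
`Cβ ≥ ‖β‖_∞`, each slice `f[t]` is integrable and
`∫₀^∞ |f(t,a)| da ≤ exp((CD+Cβ)T)(Cx·T + ‖f₀‖_{L¹})` for all `t ∈ [0,T]`; in particular
`sup_{t∈[0,T]} ‖f[t]‖_{L¹} < ∞`. If moreover `D ≥ 0` a.e. and `β ≥ 0`, then
`∫₀^∞ |f(t,a)| da ≤ Cx·t + ‖f₀‖_{L¹}` for all `t ∈ [0,T]`. -/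
theorem characteristics_formula_L1_bound
    (T : ℝ) (hT : 0 < T)
    (x : ℝ → ℝ) (hx : ContinuousOn x (Icc 0 T))
    (D : ℝ → ℝ) (hDm : Measurable D)
    (f₀ : ℝ → ℝ) (hf₀c : ContinuousOn f₀ (Ici 0)) (hf₀i : IntegrableOn f₀ (Ioi 0))
    (β : ℝ → ℝ) (hβc : ContinuousOn β (Ici 0))
    (hx0 : f₀ 0 = x 0)
    (Cx CD Cβ : ℝ)
    (hCx : ∀ t ∈ Icc 0 T, |x t| ≤ Cx)
    (hCD : ∀ᵐ t ∂volume, t ∈ Icc (0:ℝ) T → |D t| ≤ CD)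
    (hCβ : ∀ a, 0 ≤ a → |β a| ≤ Cβ)
    (f : ℝ → ℝ → ℝ)
    (hf : ∀ t a, f t a =
      if t ≤ a then
        f₀ (a - t) * Real.exp (-(∫ s in (0:ℝ)..t, D s) - ∫ s in (a - t)..a, β s)
      else
        x (t - a) * Real.exp (-(∫ s in (t - a)..t, D s) - ∫ s in (0:ℝ)..a, β s)) :
    (∀ t ∈ Icc 0 T, IntegrableOn (f t) (Ioi 0)) ∧
    (∀ t ∈ Icc 0 T,
      (∫ a in Ioi (0:ℝ), |f t a|)
        ≤ Real.exp ((CD + Cβ) * T) * (Cx * T + ∫ a in Ioi (0:ℝ), |f₀ a|)) ∧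
    ((∀ᵐ t ∂volume, t ∈ Icc (0:ℝ) T → 0 ≤ D t) → (∀ a, 0 ≤ a → 0 ≤ β a) →
      ∀ t ∈ Icc 0 T,
        (∫ a in Ioi (0:ℝ), |f t a|) ≤ Cx * t + ∫ a in Ioi (0:ℝ), |f₀ a|) := by
  have hT0 : (0:ℝ) ≤ T := hT.le
  have hCx0 : 0 ≤ Cx := (abs_nonneg _).trans (hCx 0 ⟨le_rfl, hT0⟩)
  have hCβ0 : 0 ≤ Cβ := (abs_nonneg _).trans (hCβ 0 le_rfl)
  have hCD0 : 0 ≤ CD := by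
    have hne : volume.restrict (Icc (0:ℝ) T) ≠ 0 := by
      simp [Measure.restrict_eq_zero, Real.volume_Icc, ENNReal.ofReal_eq_zero, not_le, hT]
    have : (ae (volume.restrict (Icc (0:ℝ) T))).NeBot := ae_neBot.2 hne
    obtain ⟨t, ht⟩ := ((ae_restrict_iff' measurableSet_Icc).2 hCD).exists
    exact (abs_nonneg _).trans ht
  have hI0 : 0 ≤ ∫ a in Ioi (0:ℝ), |f₀ a| := integral_nonneg fun a => abs_nonneg _
  -- interval integral bounds
  have hDabs : ∀ u v, 0 ≤ u → u ≤ v → v ≤ T → |∫ s in u..v, D s| ≤ CD * (v - u) := by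
    intro u v hu huv hvT
    have h : ∀ᵐ s ∂volume, s ∈ Set.uIoc u v → ‖D s‖ ≤ CD := by
      filter_upwards [hCD] with s hs hsuv
      rw [Set.uIoc_of_le huv] at hsuv
      simpa [Real.norm_eq_abs] using hs ⟨hu.trans hsuv.1.le, hsuv.2.trans hvT⟩
    have := intervalIntegral.norm_integral_le_of_norm_le_const_ae h
    rwa [Real.norm_eq_abs, abs_of_nonneg (sub_nonneg.2 huv)] at this
  have hβabs : ∀ u v, 0 ≤ u → u ≤ v → |∫ s in u..v, β s| ≤ Cβ * (v - u) := by
    intro u v hu huv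
    have := intervalIntegral.norm_integral_le_of_norm_le_const (C := Cβ) (f := β)
      (a := u) (b := v) (fun s hs => by
        rw [Set.uIoc_of_le huv] at hs
        simpa [Real.norm_eq_abs] using hCβ s (hu.trans hs.1.le))
    rwa [Real.norm_eq_abs, abs_of_nonneg (sub_nonneg.2 huv)] at this
  -- integrable modification of D and continuous modification of β
  have hDint : IntegrableOn D (Icc 0 T) := by
    refine Integrable.mono' (integrable_const CD) hDm.aestronglyMeasurable.restrict ?_
    refine (ae_restrict_iff' measurableSet_Icc).2 ?_
    filter_upwards [hCD] with s hs hmem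
    simpa [Real.norm_eq_abs] using hs hmem
  have hD'' : Integrable ((Icc (0:ℝ) T).indicator D) volume :=
    hDint.integrable_indicator measurableSet_Icc
  have hDeq : ∀ u v, u ∈ Icc (0:ℝ) T → v ∈ Icc (0:ℝ) T →
      (∫ s in u..v, D s) = ∫ s in u..v, (Icc (0:ℝ) T).indicator D s := by
    intro u v hu hv
    refine (intervalIntegral.integral_congr fun s hs => ?_).symm
    exact Set.indicator_of_mem (Set.uIcc_subset_Icc hu hv hs) D
  have hβ' : Continuous (fun s : ℝ => β (max s 0)) :=
    hβc.comp_continuous (continuous_id.max continuous_const) (fun s => show (0:ℝ) ≤ max s 0 from le_max_right _ _)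
  have hβeq : ∀ u v, 0 ≤ u → 0 ≤ v → (∫ s in u..v, β s) = ∫ s in u..v, β (max s 0) := by
    intro u v hu hv
    refine intervalIntegral.integral_congr fun s hs => ?_
    have h0s : 0 ≤ s := by
      rcases le_total u v with h | h
      · rw [Set.uIcc_of_le h] at hs; exact hu.trans hs.1
      · rw [Set.uIcc_of_ge h] at hs; exact hv.trans hs.1
    rw [max_eq_left h0s]
  have hP : Continuous (fun u : ℝ => ∫ s in (0:ℝ)..u, (Icc (0:ℝ) T).indicator D s) :=
    intervalIntegral.continuous_primitive (fun a b => hD''.intervalIntegrable) 0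
  have hB : Continuous (fun u : ℝ => ∫ s in (0:ℝ)..u, β (max s 0)) :=
    intervalIntegral.continuous_primitive (fun a b => hβ'.intervalIntegrable a b) 0
  -- main estimate
  have main : ∀ t ∈ Icc 0 T, ∀ K : ℝ, 0 ≤ K →
      (∀ a ∈ Ioc 0 t, Real.exp (-(∫ s in (t - a)..t, D s) - ∫ s in (0:ℝ)..a, β s) ≤ K) →
      (∀ a ∈ Ioi t, Real.exp (-(∫ s in (0:ℝ)..t, D s) - ∫ s in (a - t)..a, β s) ≤ K) →
      IntegrableOn (f t) (Ioi 0) ∧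
        (∫ a in Ioi (0:ℝ), |f t a|) ≤ K * (Cx * t) + K * ∫ a in Ioi (0:ℝ), |f₀ a| := by
    rintro t ⟨ht0, htT⟩ K hK0 hK1 hK2
    set P : ℝ → ℝ := fun u => ∫ s in (0:ℝ)..u, (Icc (0:ℝ) T).indicator D s with hPdef
    set B : ℝ → ℝ := fun u => ∫ s in (0:ℝ)..u, β (max s 0) with hBdef
    set g : ℝ → ℝ := fun a => if t ≤ a then
        f₀ (max (a - t) 0) * Real.exp (-(P t) - (B a - B (a - t)))
      else x (min (max (t - a) 0) T) * Real.exp (-(P t - P (t - a)) - B a) with hgdef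
    have heq : ∀ a ∈ Ioi (0:ℝ), f t a = g a := by
      intro a ha
      have ha0 : 0 < a := ha
      rw [hf]
      simp only [hgdef]
      by_cases hta : t ≤ a
      · rw [if_pos hta, if_pos hta]
        have h1 : max (a - t) 0 = a - t := max_eq_left (sub_nonneg.2 hta)
        have h2 : P t = ∫ s in (0:ℝ)..t, D s := (hDeq 0 t ⟨le_rfl, hT0⟩ ⟨ht0, htT⟩).symm
        have h3 : B a - B (a - t) = ∫ s in (a - t)..a, β s := by
          simp only [hBdef]
          rw [intervalIntegral.integral_interval_sub_left (hβ'.intervalIntegrable 0 a)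
            (hβ'.intervalIntegrable 0 (a - t))]
          exact (hβeq (a - t) a (sub_nonneg.2 hta) ha0.le).symm
        rw [h1, h2, h3]
      · rw [if_neg hta, if_neg hta]
        have h0ta : 0 < t - a := sub_pos.2 (not_le.1 hta)
        have htaT : t - a ≤ T := (sub_le_self t ha0.le).trans htT
        have h1 : min (max (t - a) 0) T = t - a := by
          rw [max_eq_left h0ta.le, min_eq_left htaT]
        have h2 : P t - P (t - a) = ∫ s in (t - a)..t, D s := by
          simp only [hPdef]
          rw [intervalIntegral.integral_interval_sub_left (hD''.intervalIntegrable)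
            (hD''.intervalIntegrable)]
          exact (hDeq (t - a) t ⟨h0ta.le, htaT⟩ ⟨ht0, htT⟩).symm
        have h3 : B a = ∫ s in (0:ℝ)..a, β s := (hβeq 0 a le_rfl ha0.le).symm
        rw [h1, h2, h3]
    have hc1 : Continuous fun a : ℝ =>
        f₀ (max (a - t) 0) * Real.exp (-(P t) - (B a - B (a - t))) := by
      refine Continuous.mul ?_ ?_
      · exact hf₀c.comp_continuous ((continuous_id.sub continuous_const).max continuous_const)
          (fun a => show (0:ℝ) ≤ max (a - t) 0 from le_max_right _ _)
      · exact Real.continuous_exp.comp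
          (continuous_const.sub (hB.sub (hB.comp (continuous_id.sub continuous_const))))
    have hc2 : Continuous fun a : ℝ =>
        x (min (max (t - a) 0) T) * Real.exp (-(P t - P (t - a)) - B a) := by
      refine Continuous.mul ?_ ?_
      · exact hx.comp_continuous
          (((continuous_const.sub continuous_id).max continuous_const).min continuous_const)
          (fun a => ⟨le_min (le_max_right _ _) hT0, min_le_right _ _⟩)
      · exact Real.continuous_exp.comp
          (((continuous_const.sub (hP.comp (continuous_const.sub continuous_id))).neg).sub hB)
    have hgm : Measurable g := by
      rw [hgdef]
      exact Measurable.ite (measurableSet_le measurable_const measurable_id)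
        hc1.measurable hc2.measurable
    have hfg : f t =ᵐ[volume.restrict (Ioi (0:ℝ))] g :=
      (ae_restrict_iff' measurableSet_Ioi).2 (Filter.Eventually.of_forall heq)
    have hmeas : AEStronglyMeasurable (f t) (volume.restrict (Ioi (0:ℝ))) :=
      hgm.aestronglyMeasurable.congr hfg.symm
    have hval1 : ∀ a ∈ Ioc (0:ℝ) t, f t a =
        x (t - a) * Real.exp (-(∫ s in (t - a)..t, D s) - ∫ s in (0:ℝ)..a, β s) := by
      rintro a ⟨ha0, hat⟩
      rw [hf]
      rcases eq_or_lt_of_le hat with rfl | hlt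
      · rw [if_pos le_rfl]
        simp only [sub_self, hx0]
      · rw [if_neg (not_le.2 hlt)]
    have hval2 : ∀ a ∈ Ioi t, f t a =
        f₀ (a - t) * Real.exp (-(∫ s in (0:ℝ)..t, D s) - ∫ s in (a - t)..a, β s) :=
      fun a ha => by rw [hf, if_pos (le_of_lt ha)]
    have hb1 : ∀ a ∈ Ioc (0:ℝ) t, |f t a| ≤ K * Cx := by
      intro a ha
      rw [hval1 a ha, abs_mul, Real.abs_exp]
      have hx' : |x (t - a)| ≤ Cx :=
        hCx _ ⟨sub_nonneg.2 ha.2, (sub_le_self t ha.1.le).trans htT⟩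
      calc |x (t - a)| * Real.exp (-(∫ s in (t - a)..t, D s) - ∫ s in (0:ℝ)..a, β s)
          ≤ Cx * K := mul_le_mul hx' (hK1 a ha) (Real.exp_pos _).le hCx0
        _ = K * Cx := mul_comm _ _
    have hb2 : ∀ a ∈ Ioi t, |f t a| ≤ K * |(Ioi (0:ℝ)).indicator f₀ (a - t)| := by
      intro a ha
      have hat : t < a := ha
      rw [hval2 a ha, abs_mul, Real.abs_exp,
        Set.indicator_of_mem (show a - t ∈ Ioi (0:ℝ) from sub_pos.2 hat)]
      calc |f₀ (a - t)| * Real.exp (-(∫ s in (0:ℝ)..t, D s) - ∫ s in (a - t)..a, β s)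
          ≤ |f₀ (a - t)| * K := mul_le_mul_of_nonneg_left (hK2 a ha) (abs_nonneg _)
        _ = K * |f₀ (a - t)| := mul_comm _ _
    have h0i : Integrable ((Ioi (0:ℝ)).indicator f₀) volume :=
      hf₀i.integrable_indicator measurableSet_Ioi
    have hbndInt : Integrable (fun a => K * |(Ioi (0:ℝ)).indicator f₀ (a - t)|) volume :=
      ((h0i.comp_sub_right t).abs).const_mul K
    have hint2 : IntegrableOn (f t) (Ioi t) := by
      refine Integrable.mono' hbndInt.integrableOn
        (hmeas.mono_measure (Measure.restrict_mono (Ioi_subset_Ioi ht0) le_rfl)) ?_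
      refine (ae_restrict_iff' measurableSet_Ioi).2 (Filter.Eventually.of_forall fun a ha => ?_)
      simpa [Real.norm_eq_abs] using hb2 a ha
    have hconst : IntegrableOn (fun _ : ℝ => K * Cx) (Ioc (0:ℝ) t) :=
      integrableOn_const measure_Ioc_lt_top.ne
    have hint1 : IntegrableOn (f t) (Ioc 0 t) := by
      refine Integrable.mono' hconst
        (hmeas.mono_measure (Measure.restrict_mono Ioc_subset_Ioi_self le_rfl)) ?_
      refine (ae_restrict_iff' measurableSet_Ioc).2 (Filter.Eventually.of_forall fun a ha => ?_)
      simpa [Real.norm_eq_abs] using hb1 a ha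
    have hunion : Ioc (0:ℝ) t ∪ Ioi t = Ioi (0:ℝ) := Ioc_union_Ioi_eq_Ioi ht0
    have hint : IntegrableOn (f t) (Ioi 0) := by
      rw [← hunion]; exact hint1.union hint2
    refine ⟨hint, ?_⟩
    have habs1 : IntegrableOn (fun a => |f t a|) (Ioc (0:ℝ) t) := hint1.abs
    have habs2 : IntegrableOn (fun a => |f t a|) (Ioi t) := hint2.abs
    have hsplit : (∫ a in Ioi (0:ℝ), |f t a|)
        = (∫ a in Ioc (0:ℝ) t, |f t a|) + ∫ a in Ioi t, |f t a| := by
      rw [← hunion, setIntegral_union (Ioc_disjoint_Ioi le_rfl) measurableSet_Ioi habs1 habs2]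
    have hI1 : (∫ a in Ioc (0:ℝ) t, |f t a|) ≤ K * Cx * t := by
      calc (∫ a in Ioc (0:ℝ) t, |f t a|) ≤ ∫ _a in Ioc (0:ℝ) t, K * Cx :=
            setIntegral_mono_on habs1 hconst measurableSet_Ioc hb1
        _ = K * Cx * t := by
            rw [setIntegral_const, Real.volume_real_Ioc_of_le ht0, sub_zero,
              smul_eq_mul, mul_comm]
    have hI2 : (∫ a in Ioi t, |f t a|) ≤ K * ∫ a in Ioi (0:ℝ), |f₀ a| := by
      have step1 : (∫ a in Ioi t, |f t a|)
          ≤ ∫ a in Ioi t, K * |(Ioi (0:ℝ)).indicator f₀ (a - t)| :=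
        setIntegral_mono_on habs2 hbndInt.integrableOn measurableSet_Ioi hb2
      have step2 : (∫ a in Ioi t, K * |(Ioi (0:ℝ)).indicator f₀ (a - t)|)
          = K * ∫ a in Ioi (0:ℝ), |f₀ a| := by
        rw [integral_const_mul]
        congr 1
        have hzero : ∀ a : ℝ, a ∉ Ioi t → |(Ioi (0:ℝ)).indicator f₀ (a - t)| = 0 := by
          intro a ha
          have : a - t ∉ Ioi (0:ℝ) := by
            simp only [mem_Ioi, not_lt] at ha ⊢
            linarith
          rw [Set.indicator_of_notMem this, abs_zero]
        rw [setIntegral_eq_integral_of_forall_compl_eq_zero hzero,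
          integral_sub_right_eq_self (fun a => |(Ioi (0:ℝ)).indicator f₀ a|) t,
          ← integral_indicator measurableSet_Ioi]
        congr 1 with a
        by_cases h : a ∈ Ioi (0:ℝ)
        · rw [Set.indicator_of_mem h, Set.indicator_of_mem h]
        · rw [Set.indicator_of_notMem h, Set.indicator_of_notMem h, abs_zero]
      calc (∫ a in Ioi t, |f t a|) ≤ _ := step1
        _ = K * ∫ a in Ioi (0:ℝ), |f₀ a| := step2
    rw [hsplit]
    have : K * Cx * t = K * (Cx * t) := by ring
    linarith [hI1, hI2]
  -- exponent bounds for the exponential constant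
  set K₀ : ℝ := Real.exp ((CD + Cβ) * T) with hK₀def
  have hKbound1 : ∀ t ∈ Icc (0:ℝ) T, ∀ a ∈ Ioc (0:ℝ) t,
      Real.exp (-(∫ s in (t - a)..t, D s) - ∫ s in (0:ℝ)..a, β s) ≤ K₀ := by
    rintro t ⟨ht0, htT⟩ a ⟨ha0, hat⟩
    rw [hK₀def]
    apply Real.exp_le_exp.2
    have h1 : |∫ s in (t - a)..t, D s| ≤ CD * a := by
      have := hDabs (t - a) t (sub_nonneg.2 hat) (sub_le_self t ha0.le) htT
      simpa using this
    have h2 : |∫ s in (0:ℝ)..a, β s| ≤ Cβ * a := by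
      simpa using hβabs 0 a le_rfl ha0.le
    have haT : a ≤ T := hat.trans htT
    have := neg_abs_le (∫ s in (t - a)..t, D s)
    have := neg_abs_le (∫ s in (0:ℝ)..a, β s)
    nlinarith
  have hKbound2 : ∀ t ∈ Icc (0:ℝ) T, ∀ a ∈ Ioi t,
      Real.exp (-(∫ s in (0:ℝ)..t, D s) - ∫ s in (a - t)..a, β s) ≤ K₀ := by
    rintro t ⟨ht0, htT⟩ a ha
    have hat : t < a := ha
    rw [hK₀def]
    apply Real.exp_le_exp.2
    have h1 : |∫ s in (0:ℝ)..t, D s| ≤ CD * t := by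
      simpa using hDabs 0 t le_rfl ht0 htT
    have h2 : |∫ s in (a - t)..a, β s| ≤ Cβ * t := by
      have h0at : 0 ≤ a - t := sub_nonneg.2 hat.le
      have := hβabs (a - t) a (by linarith [ht0.trans hat.le] : (0:ℝ) ≤ a - t)
        (by linarith : a - t ≤ a)
      simpa using this
    have := neg_abs_le (∫ s in (0:ℝ)..t, D s)
    have := neg_abs_le (∫ s in (a - t)..a, β s)
    nlinarith
  have hK₀0 : 0 ≤ K₀ := (Real.exp_pos _).le
  refine ⟨fun t ht => (main t ht K₀ hK₀0 (hKbound1 t ht) (hKbound2 t ht)).1,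
    fun t ht => ?_, fun hD0 hβ0 t ht => ?_⟩
  · have h := (main t ht K₀ hK₀0 (hKbound1 t ht) (hKbound2 t ht)).2
    have hmul : K₀ * (Cx * t) ≤ K₀ * (Cx * T) :=
      mul_le_mul_of_nonneg_left (mul_le_mul_of_nonneg_left ht.2 hCx0) hK₀0
    calc (∫ a in Ioi (0:ℝ), |f t a|) ≤ K₀ * (Cx * t) + K₀ * ∫ a in Ioi (0:ℝ), |f₀ a| := h
      _ ≤ K₀ * (Cx * T) + K₀ * ∫ a in Ioi (0:ℝ), |f₀ a| := by linarith
      _ = K₀ * (Cx * T + ∫ a in Ioi (0:ℝ), |f₀ a|) := by ring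
  · obtain ⟨ht0, htT⟩ := ht
    have hpos1 : ∀ a ∈ Ioc (0:ℝ) t,
        Real.exp (-(∫ s in (t - a)..t, D s) - ∫ s in (0:ℝ)..a, β s) ≤ 1 := by
      rintro a ⟨ha0, hat⟩
      rw [Real.exp_le_one_iff]
      have hX : 0 ≤ ∫ s in (t - a)..t, D s := by
        refine intervalIntegral.integral_nonneg_of_ae_restrict (sub_le_self t ha0.le) ?_
        refine (ae_restrict_iff' measurableSet_Icc).2 ?_
        filter_upwards [hD0] with s hs hmem
        exact hs ⟨(sub_nonneg.2 hat).trans hmem.1, hmem.2.trans htT⟩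
      have hY : 0 ≤ ∫ s in (0:ℝ)..a, β s :=
        intervalIntegral.integral_nonneg ha0.le (fun s hs => hβ0 s hs.1)
      linarith
    have hpos2 : ∀ a ∈ Ioi t,
        Real.exp (-(∫ s in (0:ℝ)..t, D s) - ∫ s in (a - t)..a, β s) ≤ 1 := by
      intro a ha
      have hat : t < a := ha
      rw [Real.exp_le_one_iff]
      have hX : 0 ≤ ∫ s in (0:ℝ)..t, D s := by
        refine intervalIntegral.integral_nonneg_of_ae_restrict ht0 ?_
        refine (ae_restrict_iff' measurableSet_Icc).2 ?_
        filter_upwards [hD0] with s hs hmem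
        exact hs ⟨hmem.1, hmem.2.trans htT⟩
      have hY : 0 ≤ ∫ s in (a - t)..a, β s := by
        have h0at : 0 ≤ a - t := sub_nonneg.2 hat.le
        refine intervalIntegral.integral_nonneg (by linarith : a - t ≤ a)
          (fun s hs => hβ0 s ?_)
        have h0a : (0:ℝ) ≤ a - t := by linarith [ht0.trans hat.le]
        exact h0a.trans hs.1
      linarith
    have h := (main t ⟨ht0, htT⟩ 1 one_pos.le hpos1 hpos2).2
    simpa using h
end

section
/- (Uniqueness for the weak formulation of the linear transport equation.) Let T > 0, D ∈ L^∞([0,T]) and β ∈ C⁰([0,∞)) ∩ L^∞([0,∞)). Suppose u ∈ C⁰([0,T]×[0,∞)) satisfies sup_{t∈[0,T]} ∫₀^∞ |u(t,a)| da < ∞ and, for every bounded φ ∈ C¹([0,T]×[0,∞)) with ∂φ/∂a + ∂φ/∂t bounded and every t ∈ [0,T]: ∫₀^t ∫₀^∞ ((β(a)+D(s))φ(s,a) − ∂φ/∂a(s,a) − ∂φ/∂s(s,a)) u(s,a) da ds + ∫₀^∞ u(t,a)φ(t,a) da = 0. Then u(t,a) = 0 for all (t,a) ∈ [0,T]×[0,∞).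 -/
set_option maxHeartbeats 1000000


open MeasureTheory Set Filter Topology

noncomputable section

/-- Test functions for the weak formulation on `[0,T]×[0,∞)`: `φ` bounded of class `C¹`
(with partial derivatives `φt`, `φa`) and `∂φ/∂a + ∂φ/∂t` bounded. -/
def TestFun (T : ℝ) (φ φt φa : ℝ → ℝ → ℝ) : Prop :=
  ContinuousOn (fun p : ℝ × ℝ => φ p.1 p.2) (Icc 0 T ×ˢ Ici (0:ℝ)) ∧
  ContinuousOn (fun p : ℝ × ℝ => φt p.1 p.2) (Icc 0 T ×ˢ Ici (0:ℝ)) ∧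
  ContinuousOn (fun p : ℝ × ℝ => φa p.1 p.2) (Icc 0 T ×ˢ Ici (0:ℝ)) ∧
  (∀ s ∈ Icc 0 T, ∀ a ∈ Ici (0:ℝ),
    HasDerivAt (fun u => φ u a) (φt s a) s ∧ HasDerivAt (fun u => φ s u) (φa s a) a) ∧
  (∃ C, ∀ s ∈ Icc 0 T, ∀ a ∈ Ici (0:ℝ), |φ s a| ≤ C) ∧
  (∃ C, ∀ s ∈ Icc 0 T, ∀ a ∈ Ici (0:ℝ), |φa s a + φt s a| ≤ C)

/-- **Uniqueness for the weak formulation of the linear transport equation.** If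
`u ∈ C⁰([0,T]×[0,∞))` has uniformly bounded `L¹` slices and satisfies, for every test
function `φ` and every `t ∈ [0,T]`,
`∫₀^t∫₀^∞ ((β(a)+D(s))φ − ∂φ/∂a − ∂φ/∂s)·u da ds + ∫₀^∞ u(t,a)φ(t,a) da = 0`,
then `u ≡ 0` on `[0,T]×[0,∞)`. -/
theorem weak_transport_uniqueness_zero
    (T : ℝ) (hT : 0 < T)
    (D : ℝ → ℝ) (hDm : Measurable D) (hDb : ∃ C, ∀ t ∈ Icc (0:ℝ) T, |D t| ≤ C)
    (β : ℝ → ℝ) (hβc : ContinuousOn β (Ici 0)) (hβb : ∃ C, ∀ a, 0 ≤ a → |β a| ≤ C)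
    (u : ℝ → ℝ → ℝ)
    (huc : ContinuousOn (fun p : ℝ × ℝ => u p.1 p.2) (Icc 0 T ×ˢ Ici (0:ℝ)))
    (hui : ∀ t ∈ Icc 0 T, IntegrableOn (u t) (Ioi 0))
    (hub : ∃ C, ∀ t ∈ Icc 0 T, (∫ a in Ioi (0:ℝ), |u t a|) ≤ C)
    (hweak : ∀ φ φt φa, TestFun T φ φt φa → ∀ t ∈ Icc 0 T,
      (∫ s in (0:ℝ)..t, ∫ a in Ioi (0:ℝ),
          ((β a + D s) * φ s a - φa s a - φt s a) * u s a)
        + (∫ a in Ioi (0:ℝ), u t a * φ t a) = 0) :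
    ∀ t ∈ Icc 0 T, ∀ a, 0 ≤ a → u t a = 0 := by
  obtain ⟨Cβ, hCβ⟩ := hβb
  obtain ⟨CD, hCD⟩ := hDb
  set C2 : ℝ := max Cβ 0 + max CD 0 with hC2def
  have hC2 : 0 ≤ C2 := by positivity
  have hβD : ∀ s ∈ Icc (0:ℝ) T, ∀ a : ℝ, 0 ≤ a → |β a + D s| ≤ C2 := by
    intro s hs a ha
    calc |β a + D s| ≤ |β a| + |D s| := abs_add_le _ _
      _ ≤ max Cβ 0 + max CD 0 :=
        add_le_add ((hCβ a ha).trans (le_max_left _ _)) ((hCD s hs).trans (le_max_left _ _))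
  suffices hAll : ∀ A : ℝ, 0 < A → ∀ t ∈ Icc 0 T, ∀ y ∈ Icc 0 A, u t y = 0 by
    intro t ht a ha
    exact hAll (a + 1) (by linarith) t ht a ⟨ha, by linarith⟩
  intro A hA
  set Q : Set (ℝ × ℝ) := Icc (0:ℝ) T ×ˢ Icc (0:ℝ) (A + 1) with hQdef
  have hQc : IsCompact Q := isCompact_Icc.prod isCompact_Icc
  have hQsub : Q ⊆ Icc 0 T ×ˢ Ici (0:ℝ) := prod_mono_right Icc_subset_Ici_self
  have hucQ := huc.mono hQsub
  obtain ⟨K, hK⟩ := hQc.exists_bound_of_continuousOn hucQ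
  have hK0 : 0 ≤ K := by
    refine le_trans (norm_nonneg _) (hK (0, 0) ?_)
    refine ⟨⟨le_refl 0, hT.le⟩, le_refl 0, ?_⟩
    show (0:ℝ) ≤ A + 1
    linarith
  have hKQ : ∀ p ∈ Q, |u p.1 p.2| ≤ K := by
    intro p hp; simpa [Real.norm_eq_abs] using hK p hp
  have hQmem : ∀ s' a' : ℝ, s' ∈ Icc 0 T → 0 ≤ a' → a' ≤ A + 1 → ((s', a') : ℝ × ℝ) ∈ Q :=
    fun s' a' hs' h1 h2 => ⟨hs', ⟨h1, h2⟩⟩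
  -- uniform continuity on Q
  have hunif : ∀ ε > 0, ∃ δ > 0, ∀ p ∈ Q, ∀ q ∈ Q, dist p q < δ →
      |u p.1 p.2 - u q.1 q.2| < ε := by
    intro ε hε
    have h := hQc.uniformContinuousOn_of_continuous hucQ
    rw [Metric.uniformContinuousOn_iff] at h
    obtain ⟨δ, hδ0, hδ⟩ := h ε hε
    exact ⟨δ, hδ0, fun p hp q hq hpq => by
      simpa [Real.dist_eq] using hδ p hp q hq hpq⟩
  -- continuity of clamped characteristic slices
  have hwc : ∀ t ∈ Icc 0 T, ∀ y : ℝ, 0 ≤ y →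
      ContinuousOn (fun s => |u s (max 0 (y - t + s))|) (Icc 0 t) := by
    intro t ht y hy
    have h1 : ContinuousOn (fun s : ℝ => ((s, max 0 (y - t + s)) : ℝ × ℝ)) (Icc 0 t) :=
      (continuous_id.prodMk (continuous_const.max (by continuity))).continuousOn
    have h2 : MapsTo (fun s : ℝ => ((s, max 0 (y - t + s)) : ℝ × ℝ)) (Icc 0 t)
        (Icc 0 T ×ˢ Ici (0:ℝ)) := by
      intro s hs; exact ⟨⟨hs.1, hs.2.trans ht.2⟩, mem_Ici.mpr (le_max_left _ _)⟩
    exact (huc.comp h1 h2).abs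
  -- the key inequality along characteristics
  have hstar : ∀ t ∈ Icc 0 T, ∀ y : ℝ, 0 < y → y ≤ A →
      |u t y| ≤ C2 * ∫ s in (0:ℝ)..t, |u s (max 0 (y - t + s))| := by
    intro t ht y hy0 hyA
    set w : ℝ → ℝ := fun s => |u s (max 0 (y - t + s))| with hwdef
    have hwint : IntervalIntegrable w volume 0 t := by
      have := hwc t ht y hy0.le
      rw [show Icc (0:ℝ) t = uIcc 0 t by rw [uIcc_of_le ht.1]] at this
      exact this.intervalIntegrable
    have hwnn : ∀ s, 0 ≤ w s := fun s => abs_nonneg _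
    refine le_of_forall_pos_le_add ?_
    intro ε hε
    set den : ℝ := 1 + C2 * t + 2 * K * C2 with hdendef
    have hden : 0 < den := by
      have h1 : 0 ≤ C2 * t := mul_nonneg hC2 ht.1
      have h2 : 0 ≤ 2 * K * C2 := by positivity
      rw [hdendef]; linarith
    set ε' : ℝ := ε / den with hedef
    have hε' : 0 < ε' := div_pos hε hden
    obtain ⟨δ, hδ0, hδ⟩ := hunif ε' hε'
    set η : ℝ := min δ (min y (min 1 ε')) with hηdef
    have hη0 : 0 < η := lt_min hδ0 (lt_min hy0 (lt_min one_pos hε'))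
    have hηδ : η ≤ δ := min_le_left _ _
    have hηy : η ≤ y := (min_le_right _ _).trans (min_le_left _ _)
    have hη1 : η ≤ 1 := ((min_le_right _ _).trans (min_le_right _ _)).trans (min_le_left _ _)
    have hηε : η ≤ ε' := ((min_le_right _ _).trans (min_le_right _ _)).trans (min_le_right _ _)
    set f : ContDiffBump (y : ℝ) := ⟨η/2, η, by linarith, by linarith⟩ with hfdef
    set ψ : ℝ → ℝ := f.normed volume with hψdef
    have hψcd : ContDiff ℝ 1 ψ := f.contDiff_normed
    have hψcont : Continuous ψ := hψcd.continuous
    have hdψcont : Continuous (deriv ψ) := hψcd.continuous_deriv le_rfl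
    have hψnn : ∀ x, 0 ≤ ψ x := fun x => f.nonneg_normed x
    have hψint : Integrable ψ := f.integrable_normed
    have hψtot : (∫ x, ψ x) = 1 := f.integral_normed
    have hψsupp : ∀ x : ℝ, x ∉ Metric.ball y η → ψ x = 0 := by
      intro x hx
      by_contra h
      apply hx
      have hx' : x ∈ Function.support ψ := h
      rw [hψdef, f.support_normed_eq] at hx'
      exact hx'
    have hder : ∀ x, HasDerivAt ψ (deriv ψ x) x :=
      fun x => (hψcd.differentiable one_ne_zero x).hasDerivAt
    have hψb : ∃ C, ∀ x, ‖ψ x‖ ≤ C :=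
      f.hasCompactSupport_normed.exists_bound_of_continuous hψcont
    -- the test function
    have htest : TestFun T (fun s a => ψ (a + t - s)) (fun s a => -(deriv ψ (a + t - s)))
        (fun s a => deriv ψ (a + t - s)) := by
      refine ⟨?_, ?_, ?_, ?_, ?_, ?_⟩
      · exact (hψcont.comp ((continuous_snd.add continuous_const).sub continuous_fst)).continuousOn
      · exact ((hdψcont.comp ((continuous_snd.add continuous_const).sub continuous_fst)).neg).continuousOn
      · exact (hdψcont.comp ((continuous_snd.add continuous_const).sub continuous_fst)).continuousOn
      · intro s hs a ha
        constructor
        · have h1 : HasDerivAt (fun v : ℝ => a + t - v) (-1) s :=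
            (hasDerivAt_id s).const_sub (a + t)
          have h2 := (hder (a + t - s)).comp s h1
          simpa [Function.comp_def, mul_neg_one] using h2
        · have h1 : HasDerivAt (fun v : ℝ => v + t - s) 1 a :=
            ((hasDerivAt_id a).add_const t).sub_const s
          have h2 := (hder (a + t - s)).comp a h1
          simpa [Function.comp_def] using h2
      · obtain ⟨Cψ, hCψ⟩ := hψb
        exact ⟨Cψ, fun s _ a _ => by simpa [Real.norm_eq_abs] using hCψ (a + t - s)⟩
      · exact ⟨0, fun s _ a _ => by simp⟩
    have hid := hweak _ _ _ htest t ht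
    beta_reduce at hid
    have hinner : ∀ s : ℝ, (∫ a in Ioi (0:ℝ),
        ((β a + D s) * ψ (a + t - s) - deriv ψ (a + t - s) - -(deriv ψ (a + t - s))) * u s a)
        = ∫ a in Ioi (0:ℝ), (β a + D s) * ψ (a + t - s) * u s a := by
      intro s
      apply integral_congr_ae
      filter_upwards with a
      ring
    rw [intervalIntegral.integral_congr (fun s _ => hinner s)] at hid
    simp only [add_sub_cancel_right] at hid
    -- hid : (∫ s in 0..t, ∫ a in Ioi 0, (β a + D s) * ψ (a+t-s) * u s a)
    --        + ∫ a in Ioi 0, u t a * ψ a = 0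
    have hcompl : ∀ a : ℝ, a ∉ Ioi (0:ℝ) → u t a * ψ a = 0 := by
      intro a ha
      have : ψ a = 0 := by
        refine hψsupp a (fun hmem => ha ?_)
        rw [Metric.mem_ball, Real.dist_eq] at hmem
        obtain ⟨h1a, h1b⟩ := abs_lt.mp hmem
        exact mem_Ioi.mpr (by linarith)
      rw [this, mul_zero]
    have hmass : (∫ a in Ioi (0:ℝ), ψ a) = 1 := by
      have hc : ∀ a : ℝ, a ∉ Ioi (0:ℝ) → ψ a = 0 := by
        intro a ha
        refine hψsupp a (fun hmem => ha ?_)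
        rw [Metric.mem_ball, Real.dist_eq] at hmem
        obtain ⟨h1a, h1b⟩ := abs_lt.mp hmem
        exact mem_Ioi.mpr (by linarith)
      rw [setIntegral_eq_integral_of_forall_compl_eq_zero hc]
      exact hψtot
    have hψQmeas : AEStronglyMeasurable ψ (volume.restrict (Ioi (0:ℝ))) :=
      hψcont.aestronglyMeasurable.restrict
    have hint_uψ : IntegrableOn (fun a => u t a * ψ a) (Ioi 0) := by
      have h := (hui t ht).bdd_mul hψQmeas (ae_of_all _ hψb.choose_spec)
      have e : (fun a => u t a * ψ a) = fun a => ψ a * u t a :=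
        funext fun a => mul_comm _ _
      rw [e]; exact h
    -- second term estimate
    have hstep2 : |(∫ a in Ioi (0:ℝ), u t a * ψ a) - u t y| ≤ ε' := by
      have hconst : IntegrableOn (fun a : ℝ => u t y * ψ a) (Ioi 0) :=
        hψint.integrableOn.const_mul (u t y)
      have hrw : (∫ a in Ioi (0:ℝ), u t a * ψ a) - u t y
          = ∫ a in Ioi (0:ℝ), (u t a - u t y) * ψ a := by
        have h1 : (∫ a in Ioi (0:ℝ), (u t a - u t y) * ψ a)
            = (∫ a in Ioi (0:ℝ), u t a * ψ a) - ∫ a in Ioi (0:ℝ), u t y * ψ a := by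
          rw [show (fun a => (u t a - u t y) * ψ a)
              = fun a => u t a * ψ a - u t y * ψ a from funext fun a => by ring]
          exact integral_sub hint_uψ hconst
        have h2 : (∫ a in Ioi (0:ℝ), u t y * ψ a) = u t y := by
          rw [integral_const_mul, hmass, mul_one]
        rw [h1, h2]
      rw [hrw]
      have hintsub : Integrable (fun a => (u t a - u t y) * ψ a) (volume.restrict (Ioi 0)) := by
        rw [show (fun a => (u t a - u t y) * ψ a)
            = fun a => u t a * ψ a - u t y * ψ a from funext fun a => by ring]
        exact hint_uψ.sub hconst
      have hb : ∀ a ∈ Ioi (0:ℝ), |(u t a - u t y) * ψ a| ≤ ε' * ψ a := by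
        intro a ha
        by_cases hz : ψ a = 0
        · simp [hz]
        · have hmem : a ∈ Metric.ball y η := by
            by_contra hmem; exact hz (hψsupp a hmem)
          rw [Metric.mem_ball, Real.dist_eq] at hmem
          obtain ⟨h1a, h1b⟩ := abs_lt.mp hmem
          have hQa : ((t, a) : ℝ × ℝ) ∈ Q := hQmem t a ht (le_of_lt ha) (by linarith)
          have hQy : ((t, y) : ℝ × ℝ) ∈ Q := hQmem t y ht hy0.le (by linarith)
          have hd : dist ((t, a) : ℝ × ℝ) ((t, y) : ℝ × ℝ) < δ := by
            rw [Prod.dist_eq]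
            simp only [dist_self, Real.dist_eq]
            rw [max_eq_right (abs_nonneg _)]
            exact lt_of_lt_of_le hmem hηδ
          have hlt := hδ _ hQa _ hQy hd
          simp only at hlt
          rw [abs_mul, abs_of_nonneg (hψnn a)]
          exact mul_le_mul_of_nonneg_right (le_of_lt hlt) (hψnn a)
      calc |∫ a in Ioi (0:ℝ), (u t a - u t y) * ψ a|
          = ‖∫ a in Ioi (0:ℝ), (u t a - u t y) * ψ a‖ := (Real.norm_eq_abs _).symm
        _ ≤ ∫ a in Ioi (0:ℝ), ‖(u t a - u t y) * ψ a‖ :=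
            norm_integral_le_integral_norm _
        _ ≤ ∫ a in Ioi (0:ℝ), ε' * ψ a := by
            refine setIntegral_mono_on hintsub.norm (hψint.integrableOn.const_mul ε')
              measurableSet_Ioi ?_
            intro a ha
            rw [Real.norm_eq_abs]
            exact hb a ha
        _ = ε' := by rw [integral_const_mul, hmass, mul_one]
    -- first term estimate
    have hindnn : ∀ s, 0 ≤ (Ioo (t - y - η) (t - y + η)).indicator (fun _ => (1:ℝ)) s :=
      fun s => Set.indicator_nonneg (fun _ _ => zero_le_one) s
    set G : ℝ → ℝ := fun s =>
      C2 * (w s + ε' + K * (Ioo (t - y - η) (t - y + η)).indicator (fun _ => (1:ℝ)) s)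
      with hGdef
    have hGnn : ∀ s, 0 ≤ G s := fun s =>
      mul_nonneg hC2 (add_nonneg (add_nonneg (hwnn s) hε'.le) (mul_nonneg hK0 (hindnn s)))
    have hJ : ∀ s ∈ Ioc (0:ℝ) t,
        ‖∫ a in Ioi (0:ℝ), (β a + D s) * ψ (a + t - s) * u s a‖ ≤ G s := by
      intro s hs
      have hsT : s ∈ Icc 0 T := ⟨hs.1.le, hs.2.trans ht.2⟩
      have hψs_int : Integrable (fun a : ℝ => ψ (a + t - s)) := by
        have h := hψint.comp_add_right (t - s)
        rw [show (fun a : ℝ => ψ (a + t - s)) = fun a : ℝ => ψ (a + (t - s))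
          from funext fun a => by ring_nf]
        exact h
      have hmassle : (∫ a in Ioi (0:ℝ), ψ (a + t - s)) ≤ 1 := by
        have h1 : (∫ a in Ioi (0:ℝ), ψ (a + t - s)) ≤ ∫ a, ψ (a + t - s) :=
          setIntegral_le_integral hψs_int (Eventually.of_forall fun a => hψnn _)
        have h2 : (∫ a : ℝ, ψ (a + t - s)) = 1 := by
          rw [show (fun a : ℝ => ψ (a + t - s)) = fun a : ℝ => ψ (a + (t - s))
            from funext fun a => by ring_nf]
          rw [integral_add_right_eq_self]
          exact hψtot
        linarith
      have hψsb : ∃ C, ∀ x : ℝ, ‖ψ (x + t - s)‖ ≤ C := by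
        obtain ⟨C, hC⟩ := hψb
        exact ⟨C, fun x => hC (x + t - s)⟩
      have hIψu : IntegrableOn (fun a => ψ (a + t - s) * |u s a|) (Ioi 0) :=
        (hui s hsT).abs.bdd_mul
          ((hψcont.comp ((continuous_id.add continuous_const).sub continuous_const)).aestronglyMeasurable.restrict)
          (ae_of_all _ hψsb.choose_spec)
      have hJs : (∫ a in Ioi (0:ℝ), ψ (a + t - s) * |u s a|)
          ≤ w s + ε' + K * (Ioo (t - y - η) (t - y + η)).indicator (fun _ => (1:ℝ)) s := by
        by_cases hc1 : t - y + η ≤ s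
        · have hptw : ∀ a ∈ Ioi (0:ℝ), ψ (a + t - s) * |u s a|
              ≤ ψ (a + t - s) * (|u s (y - t + s)| + ε') := by
            intro a ha
            by_cases hz : ψ (a + t - s) = 0
            · simp [hz]
            · have hmem : (a + t - s) ∈ Metric.ball y η := by
                by_contra hmem; exact hz (hψsupp _ hmem)
              rw [Metric.mem_ball, Real.dist_eq] at hmem
              obtain ⟨h1a, h1b⟩ := abs_lt.mp hmem
              have hst : s ≤ t := hs.2
              have hQa : ((s, a) : ℝ × ℝ) ∈ Q := hQmem s a hsT (le_of_lt ha) (by linarith)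
              have hQy : ((s, y - t + s) : ℝ × ℝ) ∈ Q :=
                hQmem s (y - t + s) hsT (by linarith) (by linarith)
              have hd : dist ((s, a) : ℝ × ℝ) ((s, y - t + s) : ℝ × ℝ) < δ := by
                rw [Prod.dist_eq]
                simp only [dist_self, Real.dist_eq]
                rw [max_eq_right (abs_nonneg _)]
                have he : |a - (y - t + s)| = |a + t - s - y| := by
                  congr 1; ring
                rw [he]; exact lt_of_lt_of_le hmem hηδ
              have hlt := hδ _ hQa _ hQy hd
              simp only at hlt
              have habs : |u s a| ≤ |u s (y - t + s)| + ε' := by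
                have h3 := abs_sub_abs_le_abs_sub (u s a) (u s (y - t + s))
                linarith
              exact mul_le_mul_of_nonneg_left habs (hψnn _)
          have hwv : w s = |u s (y - t + s)| := by
            rw [hwdef]
            simp only
            rw [max_eq_right (by linarith : (0:ℝ) ≤ y - t + s)]
          calc (∫ a in Ioi (0:ℝ), ψ (a + t - s) * |u s a|)
              ≤ ∫ a in Ioi (0:ℝ), ψ (a + t - s) * (|u s (y - t + s)| + ε') :=
                setIntegral_mono_on hIψu (hψs_int.integrableOn.mul_const _)
                  measurableSet_Ioi hptw
            _ = (∫ a in Ioi (0:ℝ), ψ (a + t - s)) * (|u s (y - t + s)| + ε') :=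
                integral_mul_const _ _
            _ ≤ 1 * (|u s (y - t + s)| + ε') :=
                mul_le_mul_of_nonneg_right hmassle (by positivity)
            _ ≤ w s + ε' + K * (Ioo (t - y - η) (t - y + η)).indicator (fun _ => (1:ℝ)) s := by
                rw [one_mul, hwv]
                have := mul_nonneg hK0 (hindnn s)
                linarith
        · by_cases hc2 : s ≤ t - y - η
          · have hzero : ∀ a ∈ Ioi (0:ℝ), ψ (a + t - s) * |u s a| = 0 := by
              intro a ha
              have hz : ψ (a + t - s) = 0 := by
                refine hψsupp _ (fun hmem => ?_)
                rw [Metric.mem_ball, Real.dist_eq] at hmem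
                obtain ⟨h1a, h1b⟩ := abs_lt.mp hmem
                have ha' : (0:ℝ) < a := ha
                linarith
              rw [hz, zero_mul]
            rw [setIntegral_congr_fun measurableSet_Ioi hzero]
            simp only [integral_zero]
            have := mul_nonneg hK0 (hindnn s)
            have := hwnn s
            linarith
          · push_neg at hc1 hc2
            have hind1 : (Ioo (t - y - η) (t - y + η)).indicator (fun _ => (1:ℝ)) s = 1 :=
              indicator_of_mem (Set.mem_Ioo.mpr ⟨hc2, hc1⟩) _
            have hptw : ∀ a ∈ Ioi (0:ℝ), ψ (a + t - s) * |u s a| ≤ ψ (a + t - s) * K := by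
              intro a ha
              by_cases hz : ψ (a + t - s) = 0
              · simp [hz]
              · have hmem : (a + t - s) ∈ Metric.ball y η := by
                  by_contra hmem; exact hz (hψsupp _ hmem)
                rw [Metric.mem_ball, Real.dist_eq] at hmem
                obtain ⟨h1a, h1b⟩ := abs_lt.mp hmem
                have hst : s ≤ t := hs.2
                have hQa : ((s, a) : ℝ × ℝ) ∈ Q := hQmem s a hsT (le_of_lt ha) (by linarith)
                have := hKQ (s, a) hQa
                simp only at this
                exact mul_le_mul_of_nonneg_left this (hψnn _)
            calc (∫ a in Ioi (0:ℝ), ψ (a + t - s) * |u s a|)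
                ≤ ∫ a in Ioi (0:ℝ), ψ (a + t - s) * K :=
                  setIntegral_mono_on hIψu (hψs_int.integrableOn.mul_const _)
                    measurableSet_Ioi hptw
              _ = (∫ a in Ioi (0:ℝ), ψ (a + t - s)) * K := integral_mul_const _ _
              _ ≤ 1 * K := mul_le_mul_of_nonneg_right hmassle hK0
              _ ≤ w s + ε' + K * (Ioo (t - y - η) (t - y + η)).indicator (fun _ => (1:ℝ)) s := by
                  rw [hind1, one_mul, mul_one]
                  have := hwnn s
                  linarith
      have hβm : AEStronglyMeasurable β (volume.restrict (Ioi (0:ℝ))) :=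
        (hβc.aestronglyMeasurable measurableSet_Ici).mono_measure
          (Measure.restrict_mono Ioi_subset_Ici_self le_rfl)
      have hprod_meas : AEStronglyMeasurable (fun a => (β a + D s) * ψ (a + t - s) * u s a)
          (volume.restrict (Ioi (0:ℝ))) :=
        ((hβm.add aestronglyMeasurable_const).mul
          ((hψcont.comp ((continuous_id.add continuous_const).sub continuous_const)).aestronglyMeasurable.restrict)).mul
          (hui s hsT).aestronglyMeasurable
      have hptw2 : ∀ᵐ a ∂(volume.restrict (Ioi (0:ℝ))),
          ‖(β a + D s) * ψ (a + t - s) * u s a‖ ≤ C2 * (ψ (a + t - s) * |u s a|) := by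
        rw [ae_restrict_iff' measurableSet_Ioi]
        filter_upwards with a ha
        have h1 : |β a + D s| ≤ C2 := hβD s hsT a (le_of_lt ha)
        rw [Real.norm_eq_abs, abs_mul, abs_mul, abs_of_nonneg (hψnn _)]
        have h2 : 0 ≤ ψ (a + t - s) * |u s a| := mul_nonneg (hψnn _) (abs_nonneg _)
        calc |β a + D s| * ψ (a + t - s) * |u s a|
            ≤ C2 * ψ (a + t - s) * |u s a| := by
              apply mul_le_mul_of_nonneg_right _ (abs_nonneg _)
              exact mul_le_mul_of_nonneg_right h1 (hψnn _)
          _ = C2 * (ψ (a + t - s) * |u s a|) := by ring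
      have hprod_int : Integrable (fun a => (β a + D s) * ψ (a + t - s) * u s a)
          (volume.restrict (Ioi (0:ℝ))) :=
        (hIψu.const_mul C2).mono' hprod_meas hptw2
      calc ‖∫ a in Ioi (0:ℝ), (β a + D s) * ψ (a + t - s) * u s a‖
          ≤ ∫ a in Ioi (0:ℝ), ‖(β a + D s) * ψ (a + t - s) * u s a‖ :=
            norm_integral_le_integral_norm _
        _ ≤ ∫ a in Ioi (0:ℝ), C2 * (ψ (a + t - s) * |u s a|) :=
            integral_mono_ae hprod_int.norm (hIψu.const_mul C2) hptw2
        _ = C2 * ∫ a in Ioi (0:ℝ), ψ (a + t - s) * |u s a| := integral_const_mul _ _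
        _ ≤ G s := mul_le_mul_of_nonneg_left hJs hC2
    have hindint : IntervalIntegrable
        ((Ioo (t - y - η) (t - y + η)).indicator (fun _ => (1:ℝ))) volume 0 t := by
      rw [intervalIntegrable_iff, uIoc_of_le ht.1]
      exact (integrableOn_const measure_Ioc_lt_top.ne).integrable.indicator
        measurableSet_Ioo
    have hGint : IntervalIntegrable G volume 0 t :=
      ((hwint.add intervalIntegrable_const).add (hindint.const_mul K)).const_mul C2
    have hindval : (∫ s in (0:ℝ)..t,
        (Ioo (t - y - η) (t - y + η)).indicator (fun _ => (1:ℝ)) s) ≤ 2 * η := by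
      rw [intervalIntegral.integral_of_le ht.1, ← integral_indicator measurableSet_Ioc]
      rw [indicator_indicator]
      rw [integral_indicator (measurableSet_Ioc.inter measurableSet_Ioo)]
      rw [setIntegral_const]
      simp only [smul_eq_mul, mul_one]
      have h1 : volume (Ioc 0 t ∩ Ioo (t - y - η) (t - y + η))
          ≤ volume (Ioo (t - y - η) (t - y + η)) := measure_mono inter_subset_right
      have h2 : volume (Ioo (t - y - η) (t - y + η)) = ENNReal.ofReal (2 * η) := by
        rw [Real.volume_Ioo]; congr 1; ring
      calc (volume (Ioc 0 t ∩ Ioo (t - y - η) (t - y + η))).toReal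
          ≤ (volume (Ioo (t - y - η) (t - y + η))).toReal :=
            ENNReal.toReal_mono (by rw [h2]; exact ENNReal.ofReal_ne_top) h1
        _ = 2 * η := by rw [h2, ENNReal.toReal_ofReal (by linarith)]
    have hGval : (∫ s in (0:ℝ)..t, G s)
        ≤ C2 * ((∫ s in (0:ℝ)..t, w s) + ε' * t + K * (2 * η)) := by
      rw [hGdef]
      rw [intervalIntegral.integral_const_mul]
      apply mul_le_mul_of_nonneg_left _ hC2
      rw [intervalIntegral.integral_add (hwint.add intervalIntegrable_const)
        (hindint.const_mul K), intervalIntegral.integral_add hwint intervalIntegrable_const]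
      have h1 : (∫ _ in (0:ℝ)..t, ε') = ε' * t := by
        rw [intervalIntegral.integral_const, smul_eq_mul, sub_zero, mul_comm]
      have h2 : (∫ s in (0:ℝ)..t,
          K * (Ioo (t - y - η) (t - y + η)).indicator (fun _ => (1:ℝ)) s)
          = K * ∫ s in (0:ℝ)..t,
            (Ioo (t - y - η) (t - y + η)).indicator (fun _ => (1:ℝ)) s :=
        intervalIntegral.integral_const_mul _ _
      rw [h1, h2]
      have h3 := mul_le_mul_of_nonneg_left hindval hK0
      linarith
    have hI1 : ‖∫ s in (0:ℝ)..t, ∫ a in Ioi (0:ℝ), (β a + D s) * ψ (a + t - s) * u s a‖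
        ≤ C2 * ((∫ s in (0:ℝ)..t, w s) + ε' * t + K * (2 * η)) := by
      have hae : ∀ᵐ s ∂(volume.restrict (Set.uIoc 0 t)),
          ‖∫ a in Ioi (0:ℝ), (β a + D s) * ψ (a + t - s) * u s a‖ ≤ G s := by
        rw [uIoc_of_le ht.1, ae_restrict_iff' measurableSet_Ioc]
        filter_upwards with s hs
        exact hJ s hs
      have h := (intervalIntegral.norm_integral_le_of_norm_le ht.1
        ((ae_restrict_iff' measurableSet_Ioc).mp (by rwa [uIoc_of_le ht.1] at hae)) hGint).trans
        (le_abs_self _)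
      have hGpos : 0 ≤ ∫ s in (0:ℝ)..t, G s :=
        intervalIntegral.integral_nonneg ht.1 (fun s _ => hGnn s)
      calc ‖∫ s in (0:ℝ)..t, ∫ a in Ioi (0:ℝ), (β a + D s) * ψ (a + t - s) * u s a‖
          ≤ |∫ s in (0:ℝ)..t, G s| := h
        _ = ∫ s in (0:ℝ)..t, G s := abs_of_nonneg hGpos
        _ ≤ C2 * ((∫ s in (0:ℝ)..t, w s) + ε' * t + K * (2 * η)) := hGval
    -- combine
    have h6 : |u t y| ≤ ‖∫ s in (0:ℝ)..t, ∫ a in Ioi (0:ℝ),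
        (β a + D s) * ψ (a + t - s) * u s a‖ + ε' := by
      have heq : (∫ a in Ioi (0:ℝ), u t a * ψ a)
          = -(∫ s in (0:ℝ)..t, ∫ a in Ioi (0:ℝ), (β a + D s) * ψ (a + t - s) * u s a) := by
        linarith [hid]
      have h7 : |u t y| ≤ |∫ a in Ioi (0:ℝ), u t a * ψ a| + ε' := by
        have h8 : |u t y| - |∫ a in Ioi (0:ℝ), u t a * ψ a|
            ≤ |u t y - ∫ a in Ioi (0:ℝ), u t a * ψ a| :=
          abs_sub_abs_le_abs_sub _ _
        rw [abs_sub_comm] at h8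
        linarith [hstep2]
      rw [heq, abs_neg] at h7
      rw [Real.norm_eq_abs]
      exact h7
    have hεden : ε' * den = ε := div_mul_cancel₀ ε (ne_of_gt hden)
    have h8 : C2 * (K * (2 * η)) ≤ C2 * (K * (2 * ε')) :=
      mul_le_mul_of_nonneg_left
        (mul_le_mul_of_nonneg_left (by linarith) hK0) hC2
    have h9 : C2 * ((∫ s in (0:ℝ)..t, w s) + ε' * t + K * (2 * η))
        ≤ C2 * (∫ s in (0:ℝ)..t, w s) + ε' * (C2 * t) + C2 * (K * (2 * ε')) := by
      nlinarith [h8]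
    calc |u t y| ≤ ‖∫ s in (0:ℝ)..t, ∫ a in Ioi (0:ℝ),
          (β a + D s) * ψ (a + t - s) * u s a‖ + ε' := h6
      _ ≤ C2 * ((∫ s in (0:ℝ)..t, w s) + ε' * t + K * (2 * η)) + ε' :=
          add_le_add hI1 le_rfl
      _ ≤ C2 * (∫ s in (0:ℝ)..t, w s) + ε' * den := by
          rw [hdendef]
          nlinarith [h9]
      _ = (C2 * ∫ s in (0:ℝ)..t, w s) + ε := by rw [hεden]
  -- Grönwall iteration
  have hgron : ∀ n : ℕ, ∀ t ∈ Icc 0 T, ∀ y ∈ Icc 0 A,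
      |u t y| ≤ K * (C2 * t) ^ n / n.factorial := by
    intro n
    induction n with
    | zero =>
      intro t ht y hy
      simpa using hKQ (t, y) ⟨ht, ⟨hy.1, hy.2.trans (by linarith)⟩⟩
    | succ n ih =>
      have hpos : ∀ t ∈ Icc 0 T, ∀ y : ℝ, 0 < y → y ≤ A →
          |u t y| ≤ K * (C2 * t) ^ (n + 1) / (n + 1).factorial := by
        intro t ht y hy0 hyA
        have hwint : IntervalIntegrable (fun s => |u s (max 0 (y - t + s))|) volume 0 t := by
          have := (hwc t ht y hy0.le)
          rw [show Icc (0:ℝ) t = uIcc 0 t by rw [uIcc_of_le ht.1]] at this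
          exact this.intervalIntegrable
        have hpint : IntervalIntegrable (fun s : ℝ => K * (C2 * s) ^ n / n.factorial)
            volume 0 t :=
          (((continuous_const.mul ((continuous_const.mul continuous_id).pow n)).div_const
            _).intervalIntegrable _ _)
        have h1 : |u t y| ≤ C2 * ∫ s in (0:ℝ)..t, |u s (max 0 (y - t + s))| :=
          hstar t ht y hy0 hyA
        have h2 : (∫ s in (0:ℝ)..t, |u s (max 0 (y - t + s))|)
            ≤ ∫ s in (0:ℝ)..t, K * (C2 * s) ^ n / n.factorial := by
          apply intervalIntegral.integral_mono_on ht.1 hwint hpint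
          intro s hs
          have hsT : s ∈ Icc 0 T := ⟨hs.1, hs.2.trans ht.2⟩
          have hm : max 0 (y - t + s) ∈ Icc (0:ℝ) A := by
            constructor
            · exact le_max_left _ _
            · apply max_le hA.le; have := hs.2; linarith
          exact ih s hsT _ hm
        have h3 : (∫ s in (0:ℝ)..t, K * (C2 * s) ^ n / n.factorial)
            = K * C2 ^ n / n.factorial * (t ^ (n + 1) / (n + 1)) := by
          have he : ∀ s : ℝ, K * (C2 * s) ^ n / n.factorial
              = (K * C2 ^ n / n.factorial) * s ^ n := by
            intro s; rw [mul_pow]; ring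
          rw [intervalIntegral.integral_congr (fun s _ => he s),
            intervalIntegral.integral_const_mul, integral_pow]
          push_cast; ring
        have hfac : ((n + 1).factorial : ℝ) = (n + 1) * n.factorial := by
          rw [Nat.factorial_succ]; push_cast; ring
        have hn1 : (0:ℝ) < (n:ℝ) + 1 := by positivity
        have hfn : (0:ℝ) < (n.factorial : ℝ) := by positivity
        calc |u t y| ≤ C2 * ∫ s in (0:ℝ)..t, |u s (max 0 (y - t + s))| := h1
          _ ≤ C2 * (K * C2 ^ n / n.factorial * (t ^ (n + 1) / (n + 1))) := by
              rw [← h3]; exact mul_le_mul_of_nonneg_left h2 hC2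
          _ = K * (C2 * t) ^ (n + 1) / (n + 1).factorial := by
              rw [hfac, mul_pow]; push_cast; field_simp; ring
      intro t ht y hy
      rcases eq_or_lt_of_le hy.1 with h0 | h0
      · -- y = 0 : pass to the limit from the right
        have hten : Tendsto (fun z => |u t z|) (𝓝[>] (0:ℝ)) (𝓝 |u t 0|) := by
          have h1 : ContinuousWithinAt (fun p : ℝ × ℝ => u p.1 p.2)
              (Icc 0 T ×ˢ Ici (0:ℝ)) (t, 0) := huc (t, 0) ⟨ht, show (0:ℝ) ≤ 0 from le_refl 0⟩
          have h2 : Tendsto (fun z : ℝ => ((t, z) : ℝ × ℝ)) (𝓝[>] 0)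
              (𝓝[Icc 0 T ×ˢ Ici (0:ℝ)] (t, 0)) := by
            apply tendsto_nhdsWithin_of_tendsto_nhds_of_eventually_within
            · exact ((continuous_const.prodMk continuous_id).tendsto 0).mono_left
                nhdsWithin_le_nhds
            · filter_upwards [self_mem_nhdsWithin] with z hz
              exact ⟨ht, mem_Ici.mpr (le_of_lt (mem_Ioi.mp hz))⟩
          exact (continuous_abs.tendsto _).comp (h1.tendsto.comp h2)
        have hev : ∀ᶠ z in 𝓝[>] (0:ℝ),
            |u t z| ≤ K * (C2 * t) ^ (n + 1) / (n + 1).factorial := by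
          have hmem : Ioo (0:ℝ) A ∈ 𝓝[>] (0:ℝ) := Ioo_mem_nhdsGT_of_mem ⟨le_refl 0, hA⟩
          filter_upwards [hmem] with z hz
          exact hpos t ht z hz.1 hz.2.le
        rw [← h0]
        exact le_of_tendsto hten hev
      · exact hpos t ht y h0 hy.2
  -- conclude
  intro t ht y hy
  have hlim : Tendsto (fun n : ℕ => K * (C2 * t) ^ n / n.factorial) atTop (𝓝 0) := by
    have h := (FloorSemiring.tendsto_pow_div_factorial_atTop (C2 * t)).const_mul K
    simpa [mul_div_assoc] using h
  have hle : |u t y| ≤ 0 := ge_of_tendsto' hlim (fun n => hgron n t ht y hy)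
  exact abs_nonpos_iff.mp hle
end
end

section
/- (L¹ difference estimate for the characteristics formula, inequality (4.33).) Let T > 0, let D ∈ L^∞([0,T];[0,∞)), let β : [0,∞) → [0,∞) be bounded continuous, let x, x̃ ∈ C⁰([0,T]) and f₀, f̃₀ ∈ C⁰([0,∞)) ∩ L¹([0,∞)) with f₀(0) = x(0) and f̃₀(0) = x̃(0). Define f(t,a) = f₀(a−t)·exp(−∫₀^t D(s)ds − ∫_{a−t}^a β(s)ds) for 0 ≤ t ≤ a and f(t,a) = x(t−a)·exp(−∫_{t−a}^t D(s)ds − ∫₀^a β(s)ds) for t > a ≥ 0, and define f̃ analogously from f̃₀ and x̃. Then for all t ∈ [0,T]: ∫₀^∞ |f(t,a) − f̃(t,a)| da ≤ ∫₀^∞ |f₀(a) − f̃₀(a)| da + ∫₀^t |x(s) − x̃(s)| ds. -/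
open MeasureTheory Set Filter

/-- **L¹ difference estimate for the characteristics formula (inequality (4.33)).**
If `f` and `f'` are given by the characteristics formula (4.1) with the same
non-negative dilution `D` and mortality `β` but with data `(f₀,x)` and `(f₀',x')`
respectively, then for all `t ∈ [0,T]`:
`∫₀^∞ |f(t,a) − f'(t,a)| da ≤ ∫₀^∞ |f₀(a) − f₀'(a)| da + ∫₀^t |x(s) − x'(s)| ds`. -/
theorem characteristics_formula_L1_difference
    (T : ℝ) (hT : 0 < T)
    (D : ℝ → ℝ) (hDm : Measurable D) (hDn : ∀ t, 0 ≤ D t)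
    (hDb : ∃ C, ∀ t ∈ Icc (0:ℝ) T, D t ≤ C)
    (β : ℝ → ℝ) (hβc : ContinuousOn β (Ici 0)) (hβn : ∀ a, 0 ≤ a → 0 ≤ β a)
    (hβb : ∃ C, ∀ a, 0 ≤ a → β a ≤ C)
    (x x' : ℝ → ℝ) (hx : ContinuousOn x (Icc 0 T)) (hx' : ContinuousOn x' (Icc 0 T))
    (f₀ f₀' : ℝ → ℝ)
    (hf₀c : ContinuousOn f₀ (Ici 0)) (hf₀i : IntegrableOn f₀ (Ioi 0))
    (hf₀c' : ContinuousOn f₀' (Ici 0)) (hf₀i' : IntegrableOn f₀' (Ioi 0))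
    (hx0 : f₀ 0 = x 0) (hx0' : f₀' 0 = x' 0)
    (f f' : ℝ → ℝ → ℝ)
    (hf : ∀ t a, f t a =
      if t ≤ a then
        f₀ (a - t) * Real.exp (-(∫ s in (0:ℝ)..t, D s) - ∫ s in (a - t)..a, β s)
      else
        x (t - a) * Real.exp (-(∫ s in (t - a)..t, D s) - ∫ s in (0:ℝ)..a, β s))
    (hf' : ∀ t a, f' t a =
      if t ≤ a then
        f₀' (a - t) * Real.exp (-(∫ s in (0:ℝ)..t, D s) - ∫ s in (a - t)..a, β s)
      else
        x' (t - a) * Real.exp (-(∫ s in (t - a)..t, D s) - ∫ s in (0:ℝ)..a, β s)) :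
    ∀ t ∈ Icc 0 T,
      (∫ a in Ioi (0:ℝ), |f t a - f' t a|)
        ≤ (∫ a in Ioi (0:ℝ), |f₀ a - f₀' a|) + ∫ s in (0:ℝ)..t, |x s - x' s| := by
  intro t ht
  obtain ⟨ht0, htT⟩ := ht
  set G : ℝ → ℝ := fun a =>
    if t ≤ a then |f₀ (a - t) - f₀' (a - t)| else |x (t - a) - x' (t - a)| with hGdef
  -- integrable |f₀ - f₀'| on Ioi 0
  have habs : IntegrableOn (fun a => |f₀ a - f₀' a|) (Ioi 0) := (hf₀i.sub hf₀i').abs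
  -- indicator identity for the shift
  have hind : (Ioi t).indicator (fun a => |f₀ (a - t) - f₀' (a - t)|)
      = fun a => (Ioi (0:ℝ)).indicator (fun b => |f₀ b - f₀' b|) (a - t) := by
    funext a
    by_cases h : t < a
    · rw [indicator_of_mem (mem_Ioi.2 h), indicator_of_mem (mem_Ioi.2 (by linarith))]
    · rw [indicator_of_notMem (by simpa using h),
        indicator_of_notMem (by simp only [mem_Ioi]; push_neg at h ⊢; linarith)]
  -- integrability of shift on Ioi t
  have hsh : IntegrableOn (fun a => |f₀ (a - t) - f₀' (a - t)|) (Ioi t) := by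
    have h := ((integrable_indicator_iff measurableSet_Ioi).2 habs).comp_sub_right t
    rw [← hind] at h
    exact (integrable_indicator_iff measurableSet_Ioi).1 h
  -- G coincides with the shift on Ioi t
  have hEq1 : EqOn (fun a => |f₀ (a - t) - f₀' (a - t)|) G (Ioi t) := by
    intro a ha
    simp only [hGdef, if_pos (le_of_lt (mem_Ioi.1 ha))]
  have hG1 : IntegrableOn G (Ioi t) := hsh.congr_fun hEq1 measurableSet_Ioi
  -- G coincides with a ↦ |x (t-a) - x' (t-a)| on Ioc 0 t
  have hEq2 : EqOn (fun a => |x (t - a) - x' (t - a)|) G (Ioc 0 t) := by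
    intro a ha
    obtain ⟨ha0, hat⟩ := ha
    simp only [hGdef]
    by_cases h : t ≤ a
    · have haeq : a = t := le_antisymm hat h
      rw [if_pos h, haeq]
      simp [hx0, hx0']
    · rw [if_neg h]
  have hxc : ContinuousOn (fun a => |x (t - a) - x' (t - a)|) (Icc 0 t) := by
    have hsub : MapsTo (fun a : ℝ => t - a) (Icc 0 t) (Icc 0 T) := by
      intro a ha
      obtain ⟨h1, h2⟩ := ha
      exact ⟨by simp; linarith, by simp; linarith⟩
    exact ((hx.comp (continuousOn_const.sub continuousOn_id) hsub).sub
      (hx'.comp (continuousOn_const.sub continuousOn_id) hsub)).abs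
  have hG2 : IntegrableOn G (Ioc 0 t) :=
    ((hxc.integrableOn_Icc).mono_set Ioc_subset_Icc_self).congr_fun hEq2 measurableSet_Ioc
  have hGint : IntegrableOn G (Ioi 0) := by
    rw [← Ioc_union_Ioi_eq_Ioi ht0]
    exact hG2.union hG1
  -- pointwise bound
  have key : ∀ a ∈ Ioi (0:ℝ), |f t a - f' t a| ≤ G a := by
    intro a ha
    have ha0 : (0:ℝ) < a := mem_Ioi.1 ha
    rw [hf, hf']
    by_cases h : t ≤ a
    · simp only [hGdef, if_pos h]
      have h1 : 0 ≤ ∫ s in (0:ℝ)..t, D s :=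
        intervalIntegral.integral_nonneg ht0 fun u _ => hDn u
      have h2 : 0 ≤ ∫ s in (a - t)..a, β s :=
        intervalIntegral.integral_nonneg (by linarith) fun u hu => hβn u (by linarith [hu.1])
      have hE : Real.exp (-(∫ s in (0:ℝ)..t, D s) - ∫ s in (a - t)..a, β s) ≤ 1 := by
        rw [Real.exp_le_one_iff]; linarith
      calc |f₀ (a - t) * Real.exp (-(∫ s in (0:ℝ)..t, D s) - ∫ s in (a - t)..a, β s)
            - f₀' (a - t) * Real.exp (-(∫ s in (0:ℝ)..t, D s) - ∫ s in (a - t)..a, β s)|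
          = |f₀ (a - t) - f₀' (a - t)|
            * Real.exp (-(∫ s in (0:ℝ)..t, D s) - ∫ s in (a - t)..a, β s) := by
            rw [← sub_mul, abs_mul, abs_of_pos (Real.exp_pos _)]
        _ ≤ |f₀ (a - t) - f₀' (a - t)| * 1 :=
            mul_le_mul_of_nonneg_left hE (abs_nonneg _)
        _ = |f₀ (a - t) - f₀' (a - t)| := mul_one _
    · simp only [hGdef, if_neg h]
      push_neg at h
      have h1 : 0 ≤ ∫ s in (t - a)..t, D s :=
        intervalIntegral.integral_nonneg (by linarith) fun u _ => hDn u
      have h2 : 0 ≤ ∫ s in (0:ℝ)..a, β s :=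
        intervalIntegral.integral_nonneg (by linarith) fun u hu => hβn u hu.1
      have hE : Real.exp (-(∫ s in (t - a)..t, D s) - ∫ s in (0:ℝ)..a, β s) ≤ 1 := by
        rw [Real.exp_le_one_iff]; linarith
      calc |x (t - a) * Real.exp (-(∫ s in (t - a)..t, D s) - ∫ s in (0:ℝ)..a, β s)
            - x' (t - a) * Real.exp (-(∫ s in (t - a)..t, D s) - ∫ s in (0:ℝ)..a, β s)|
          = |x (t - a) - x' (t - a)|
            * Real.exp (-(∫ s in (t - a)..t, D s) - ∫ s in (0:ℝ)..a, β s) := by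
            rw [← sub_mul, abs_mul, abs_of_pos (Real.exp_pos _)]
        _ ≤ |x (t - a) - x' (t - a)| * 1 :=
            mul_le_mul_of_nonneg_left hE (abs_nonneg _)
        _ = |x (t - a) - x' (t - a)| := mul_one _
  calc (∫ a in Ioi (0:ℝ), |f t a - f' t a|)
      ≤ ∫ a in Ioi (0:ℝ), G a := by
        refine integral_mono_of_nonneg (ae_of_all _ fun a => abs_nonneg _) hGint ?_
        exact (ae_restrict_iff' measurableSet_Ioi).2 (ae_of_all _ key)
    _ = (∫ a in Ioc 0 t, G a) + ∫ a in Ioi t, G a := by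
        rw [← setIntegral_union (Ioc_disjoint_Ioi le_rfl) measurableSet_Ioi hG2 hG1,
          Ioc_union_Ioi_eq_Ioi ht0]
    _ = (∫ s in (0:ℝ)..t, |x s - x' s|) + ∫ a in Ioi (0:ℝ), |f₀ a - f₀' a| := by
        congr 1
        · rw [← setIntegral_congr_fun measurableSet_Ioc hEq2,
            ← intervalIntegral.integral_of_le ht0,
            intervalIntegral.integral_comp_sub_left (fun s => |x s - x' s|) t]
          norm_num
        · rw [← setIntegral_congr_fun measurableSet_Ioi hEq1,
            ← integral_indicator measurableSet_Ioi, hind,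
            integral_sub_right_eq_self ((Ioi (0:ℝ)).indicator fun b => |f₀ b - f₀' b|) t,
            integral_indicator measurableSet_Ioi]
    _ = _ := add_comm _ _
end
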